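/- Let n ≥ 1 and 0 < r ≤ 1. Suppose F, a, b are smooth on an open convex set U ⊆ B^n_r × ℝ^n × S^{n×n} and u is a smooth function on B^n_r whose 2-jet lies in U and which is a weak solution of the double divergence equation. Then for every p ∈ {1, …, n}, the function f = ∂u/∂x^p satisfies, for every η ∈ C_c^∞(B^n_r), the identity ∫_{B^n_r} [ (β₀^{ij,kl}(x) ∂_i∂_k f(x) + γ_p^{jl}(x)) ∂_j∂_l η(x) + ∂_p(ψ^k)(x) ∂_k η(x) + ∂_p ζ(x) η(x) ] dx = 0 (repeated indices i, j, k, l summed from 1 to n). -/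

import Mathlib

open MeasureTheory Metric

noncomputable section

abbrev Euc (n : ℕ) := EuclideanSpace ℝ (Fin n)
abbrev Jet (n : ℕ) := Euc n × (Fin n → ℝ) × (Fin n → Fin n → ℝ)

def pd {n : ℕ} (u : Euc n → ℝ) (i : Fin n) : Euc n → ℝ :=
  fun x => fderiv ℝ u x (EuclideanSpace.single i 1)

def pd2 {n : ℕ} (u : Euc n → ℝ) (i j : Fin n) : Euc n → ℝ := pd (pd u j) i

def pdList {n : ℕ} (u : Euc n → ℝ) : List (Fin n) → Euc n → ℝ
  | [] => u
  | i :: L => pd (pdList u L) i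

def jet {n : ℕ} (u : Euc n → ℝ) (x : Euc n) : Jet n :=
  ⟨x, fun i => pd u i x, fun i j => pd2 u i j x⟩

def dX {n : ℕ} (G : Jet n → ℝ) (ξ : Jet n) (p : Fin n) : ℝ :=
  fderiv ℝ G ξ (EuclideanSpace.single p 1, 0, 0)

def dY {n : ℕ} (G : Jet n → ℝ) (ξ : Jet n) (k : Fin n) : ℝ :=
  fderiv ℝ G ξ (0, Pi.single k 1, 0)

def dM {n : ℕ} (G : Jet n → ℝ) (ξ : Jet n) (i k : Fin n) : ℝ :=
  fderiv ℝ G ξ (0, 0, Pi.single i (Pi.single k 1))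

def IsTest {n : ℕ} (r : ℝ) (η : Euc n → ℝ) : Prop :=
  ContDiff ℝ (⊤ : ℕ∞) η ∧ HasCompactSupport η ∧ tsupport η ⊆ ball (0 : Euc n) r

def IsWeakSolution {n : ℕ} (r : ℝ)
    (F : Fin n → Fin n → Jet n → ℝ) (a : Fin n → Jet n → ℝ) (b : Jet n → ℝ)
    (u : Euc n → ℝ) : Prop :=
  ∀ η : Euc n → ℝ, IsTest r η →
    ∫ x in ball (0 : Euc n) r,
      ((∑ j, ∑ l, F j l (jet u x) * pd2 η j l x)
        + (∑ k, a k (jet u x) * pd η k x) + b (jet u x) * η x) = 0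

def LambdaUniform {n : ℕ} (Λ : ℝ) (U : Set (Jet n)) (F : Fin n → Fin n → Jet n → ℝ) : Prop :=
  ∀ ξ ∈ U, ∀ σ : Fin n → Fin n → ℝ, (∀ i j, σ i j = σ j i) →
    (∑ i, ∑ j, ∑ k, ∑ l, dM (F j l) ξ i k * σ i j * σ k l) ≥ Λ * ∑ i, ∑ j, (σ i j) ^ 2

def JetInU {n : ℕ} (r : ℝ) (U : Set (Jet n)) (u : Euc n → ℝ) : Prop :=
  ∀ x ∈ ball (0 : Euc n) r, jet u x ∈ U

def SmoothOnU {n : ℕ} (U : Set (Jet n)) (F : Fin n → Fin n → Jet n → ℝ)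
    (a : Fin n → Jet n → ℝ) (b : Jet n → ℝ) : Prop :=
  (∀ j l, ContDiffOn ℝ (⊤ : ℕ∞) (F j l) U) ∧ (∀ k, ContDiffOn ℝ (⊤ : ℕ∞) (a k) U) ∧
    ContDiffOn ℝ (⊤ : ℕ∞) b U

def C2alpha {n : ℕ} (r α : ℝ) (u : Euc n → ℝ) : Prop :=
  ContDiffOn ℝ 2 u (ball (0 : Euc n) r) ∧
  ∃ C : ℝ, ∀ i j : Fin n, ∀ x ∈ ball (0 : Euc n) r, ∀ y ∈ ball (0 : Euc n) r,
    |pd2 u i j x - pd2 u i j y| ≤ C * ‖x - y‖ ^ α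

def CalphaBnd {n : ℕ} (r α M : ℝ) (f : Euc n → ℝ) : Prop :=
  (∀ x ∈ ball (0 : Euc n) r, |f x| ≤ M) ∧
  (∀ x ∈ ball (0 : Euc n) r, ∀ y ∈ ball (0 : Euc n) r, |f x - f y| ≤ M * ‖x - y‖ ^ α)

def W2Bound {n : ℕ} (r M : ℝ) (u : Euc n → ℝ) : Prop :=
  ∀ x ∈ ball (0 : Euc n) r,
    |u x| ≤ M ∧ (∀ i, |pd u i x| ≤ M) ∧ (∀ i j, |pd2 u i j x| ≤ M)

def beta0 {n : ℕ} (F : Fin n → Fin n → Jet n → ℝ) (u : Euc n → ℝ)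
    (i j k l : Fin n) (x : Euc n) : ℝ := dM (F j l) (jet u x) i k

def gammaP {n : ℕ} (F : Fin n → Fin n → Jet n → ℝ) (u : Euc n → ℝ)
    (p j l : Fin n) (x : Euc n) : ℝ :=
  (∑ k, dY (F j l) (jet u x) k * pd2 u p k x) + dX (F j l) (jet u x) p

def psiF {n : ℕ} (a : Fin n → Jet n → ℝ) (u : Euc n → ℝ) (k : Fin n) (x : Euc n) : ℝ :=
  a k (jet u x)

def zetaF {n : ℕ} (b : Jet n → ℝ) (u : Euc n → ℝ) (x : Euc n) : ℝ := b (jet u x)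

end

/-! Differentiate the equation in `x^p`: test the weak formulation with `∂_p η`, which is again a
test function, and integrate by parts in `x^p` to move the derivative onto the coefficients
`F(x, Du, D²u)`, `a(x, Du, D²u)`, `b(x, Du, D²u)`. The chain rule expands `∂_p F^{jl}(x, Du, D²u)`
into `β₀ ∂_i∂_k f + γ_p`, once the symmetry of the third derivatives of `u` rewrites
`∂_p ∂_i ∂_k u` as `∂_i ∂_k ∂_p u`. -/

section PartialDerivative

variable {n : ℕ} {g u : Euc n → ℝ} {s : Set (Euc n)} {x : Euc n} {k m : WithTop ℕ∞}

theorem pd_eq_comp (i : Fin n) :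
    pd g i = ContinuousLinearMap.apply ℝ ℝ (EuclideanSpace.single i 1) ∘ fderiv ℝ g := rfl

theorem ContDiffAt.pd (hg : ContDiffAt ℝ k g x) (hmk : m + 1 ≤ k) (i : Fin n) :
    ContDiffAt ℝ m (pd g i) x := by
  rw [pd_eq_comp]
  exact (ContinuousLinearMap.apply ℝ ℝ _).contDiff.contDiffAt.comp x (hg.fderiv_right hmk)

theorem ContDiffOn.pd (hg : ContDiffOn ℝ k g s) (hs : IsOpen s) (hmk : m + 1 ≤ k)
    (i : Fin n) : ContDiffOn ℝ m (pd g i) s := by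
  rw [pd_eq_comp]
  exact (ContinuousLinearMap.apply ℝ ℝ _).contDiff.comp_contDiffOn (hg.fderiv_of_isOpen hs hmk)

theorem ContDiff.pd (hg : ContDiff ℝ k g) (hmk : m + 1 ≤ k) (i : Fin n) :
    ContDiff ℝ m (pd g i) := by
  rw [pd_eq_comp]
  exact (ContinuousLinearMap.apply ℝ ℝ _).contDiff.comp (hg.fderiv_right hmk)

theorem tsupport_pd_subset (i : Fin n) : tsupport (pd g i) ⊆ tsupport g :=
  (tsupport_comp_subset (map_zero (ContinuousLinearMap.apply ℝ ℝ _)) (fderiv ℝ g)).trans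
    (closure_minimal (support_fderiv_subset ℝ) (isClosed_tsupport g))

theorem HasCompactSupport.pd (hg : HasCompactSupport g) (i : Fin n) :
    HasCompactSupport (pd g i) :=
  (hg.fderiv (𝕜 := ℝ)).comp_left (map_zero (ContinuousLinearMap.apply ℝ ℝ _))

theorem pd2_eq_fderiv_fderiv (hg : DifferentiableAt ℝ (fderiv ℝ g) x) (i j : Fin n) :
    pd2 g i j x =
      fderiv ℝ (fderiv ℝ g) x (EuclideanSpace.single i 1) (EuclideanSpace.single j 1) := by
  change fderiv ℝ ((ContinuousLinearMap.apply ℝ ℝ (EuclideanSpace.single j 1)) ∘ fderiv ℝ g) x _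
    = _
  rw [fderiv_comp x (ContinuousLinearMap.differentiableAt _) hg]
  simp

theorem pd2_comm (hg : ContDiffAt ℝ 2 g x) (i j : Fin n) : pd2 g i j x = pd2 g j i x := by
  have hd : DifferentiableAt ℝ (fderiv ℝ g) x :=
    (hg.fderiv_right (m := 1) le_rfl).differentiableAt one_ne_zero
  rw [pd2_eq_fderiv_fderiv hd, pd2_eq_fderiv_fderiv hd]
  exact hg.isSymmSndFDerivAt (by simp) _ _

theorem pd_pd2_comm (hu : ContDiffAt ℝ 3 u x) (p i k : Fin n) :
    pd (pd2 u i k) p x = pd2 (pd u p) i k x := by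
  have hswap : pd (pd u k) p =ᶠ[nhds x] pd (pd u p) k :=
    (hu.eventually (by simp)).mono fun y hy => pd2_comm (hy.of_le (by norm_num)) p k
  calc pd (pd2 u i k) p x = pd2 (pd u k) p i x := rfl
    _ = pd2 (pd u k) i p x := pd2_comm (hu.pd (by norm_num) k) p i
    _ = pd2 (pd u p) i k x := by
      change fderiv ℝ (pd (pd u k) p) x _ = fderiv ℝ (pd (pd u p) k) x _
      rw [hswap.fderiv_eq]

end PartialDerivative

theorem ContinuousLinearMap.apply_prod_pi_eq_sum {E ι : Type*} [NormedAddCommGroup E]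
    [NormedSpace ℝ E] [Fintype ι] [DecidableEq ι]
    (L : E × (ι → ℝ) × (ι → ι → ℝ) →L[ℝ] ℝ) (v : E) (w : ι → ℝ) (m : ι → ι → ℝ) :
    L (v, w, m) = (∑ i, ∑ k, L (0, 0, Pi.single i (Pi.single k 1)) * m i k)
      + ((∑ k, L (0, Pi.single k 1, 0) * w k) + L (v, 0, 0)) := by
  have hdecomp : (v, w, m) = (∑ i, ∑ k, m i k • ((0 : E), (0 : ι → ℝ), Pi.single i (Pi.single k 1)))
      + ((∑ k, w k • ((0 : E), Pi.single k 1, (0 : ι → ι → ℝ))) + (v, 0, 0)) := by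
    ext <;> simp [Prod.fst_sum, Prod.snd_sum, Finset.sum_apply, Pi.single_apply]
  conv_lhs => rw [hdecomp]
  simp only [map_add, map_sum, map_smul, smul_eq_mul, mul_comm]

section Jet

variable {n : ℕ} {u : Euc n → ℝ} {s : Set (Euc n)} {x : Euc n}

theorem jet_contDiffOn {m : WithTop ℕ∞} (hu : ContDiffOn ℝ (m + 2) u s) (hs : IsOpen s) :
    ContDiffOn ℝ m (jet u) s := by
  have hu' : ContDiffOn ℝ (m + 1 + 1) u s := by rwa [add_assoc, one_add_one_eq_two]
  refine contDiffOn_id.prodMk (ContDiffOn.prodMk ?_ ?_)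
  · exact contDiffOn_pi.2 fun i => (hu'.pd hs le_rfl i).of_le le_self_add
  · exact contDiffOn_pi.2 fun i => contDiffOn_pi.2 fun j => (hu'.pd hs le_rfl j).pd hs le_rfl i

theorem hasFDerivAt_jet (hu : ContDiffAt ℝ 3 u x) :
    HasFDerivAt (jet u)
      ((ContinuousLinearMap.id ℝ (Euc n)).prod
        ((ContinuousLinearMap.pi fun i => fderiv ℝ (pd u i) x).prod
          (ContinuousLinearMap.pi fun i => ContinuousLinearMap.pi fun k =>
            fderiv ℝ (pd2 u i k) x))) x := by
  refine (hasFDerivAt_id x).prodMk ((hasFDerivAt_pi'' fun i => ?_).prodMk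
    (hasFDerivAt_pi'' fun i => hasFDerivAt_pi'' fun k => ?_))
  · exact ((hu.pd (m := 2) (by norm_num) i).differentiableAt (by norm_num)).hasFDerivAt
  · exact (((hu.pd (m := 2) (by norm_num) k).pd (m := 1) (by norm_num) i).differentiableAt
      one_ne_zero).hasFDerivAt

theorem pd_comp_jet {Φ : Jet n → ℝ} (hu : ContDiffAt ℝ 3 u x)
    (hΦ : DifferentiableAt ℝ Φ (jet u x)) (p : Fin n) :
    pd (fun y => Φ (jet u y)) p x =
      (∑ i, ∑ k, dM Φ (jet u x) i k * pd2 (pd u p) i k x)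
        + ((∑ k, dY Φ (jet u x) k * pd2 u p k x) + dX Φ (jet u x) p) := by
  have hJ := hasFDerivAt_jet hu
  have hchain : pd (fun y => Φ (jet u y)) p x = fderiv ℝ Φ (jet u x)
      (EuclideanSpace.single p 1, fun k => pd2 u p k x, fun i k => pd (pd2 u i k) p x) := by
    change fderiv ℝ (Φ ∘ jet u) x _ = _
    rw [fderiv_comp x hΦ hJ.differentiableAt, hJ.fderiv]
    rfl
  rw [hchain, ContinuousLinearMap.apply_prod_pi_eq_sum]
  simp only [pd_pd2_comm hu]
  rfl

end Jet

section IntegrationByParts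

variable {n : ℕ} {g φ : Euc n → ℝ} {s : Set (Euc n)}

theorem integrable_mul_of_tsupport_subset (hs : IsOpen s) (hg : ContinuousOn g s)
    (hφ : Continuous φ) (hφc : HasCompactSupport φ) (hφs : tsupport φ ⊆ s) :
    Integrable (fun x => g x * φ x) :=
  ((hg.mul hφ.continuousOn).continuous_of_tsupport_subset hs
    ((tsupport_mul_subset_right).trans hφs)).integrable_of_hasCompactSupport hφc.mul_left

theorem setIntegral_pd_mul_eq_neg (hs : IsOpen s) (hg : ContDiffOn ℝ 1 g s)
    (hφ : ContDiff ℝ 1 φ) (hφc : HasCompactSupport φ) (hφs : tsupport φ ⊆ s) (p : Fin n) :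
    ∫ x in s, pd g p x * φ x = -∫ x in s, g x * pd φ p x := by
  have hφ0 : ∀ x ∉ s, φ x = 0 := fun x hx =>
    image_eq_zero_of_notMem_tsupport fun h => hx (hφs h)
  have hdφ0 : ∀ x ∉ s, pd φ p x = 0 := fun x hx =>
    image_eq_zero_of_notMem_tsupport fun h => hx (hφs (tsupport_pd_subset p h))
  have hdg : ContinuousOn (pd g p) s :=
    (hg.continuousOn_fderiv_of_isOpen hs le_rfl).clm_apply continuousOn_const
  have hdφ : Continuous (pd φ p) := (hφ.continuous_fderiv one_ne_zero).clm_apply continuous_const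
  rw [setIntegral_eq_integral_of_forall_compl_eq_zero fun x hx => by simp [hφ0 x hx],
    setIntegral_eq_integral_of_forall_compl_eq_zero fun x hx => by simp [hdφ0 x hx]]
  refine neg_eq_iff_eq_neg.mp (Eq.symm ?_)
  -- the whole-space formula only asks for `g` to be differentiable on `tsupport φ ⊆ s`
  exact integral_mul_fderiv_eq_neg_fderiv_mul_of_integrable
    (integrable_mul_of_tsupport_subset hs hdg hφ.continuous hφc hφs)
    (integrable_mul_of_tsupport_subset hs hg.continuousOn hdφ (hφc.pd p)
      ((tsupport_pd_subset p).trans hφs))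
    (integrable_mul_of_tsupport_subset hs hg.continuousOn hφ.continuous hφc hφs)
    (fun x hx => (hg.differentiableOn one_ne_zero).differentiableAt (hs.mem_nhds (hφs hx)))
    (fun x _ => hφ.differentiable one_ne_zero x)

end IntegrationByParts

/-- `IsWeakSolution r F a b u` says that this integrand, with `G j l = F j l ∘ jet u`,
`A k = a k ∘ jet u` and `Z = b ∘ jet u`, integrates to zero over the ball for every test `η`. -/
noncomputable def weakIntegrand {n : ℕ} (G : Fin n → Fin n → Euc n → ℝ) (A : Fin n → Euc n → ℝ)
    (Z : Euc n → ℝ) (η : Euc n → ℝ) (x : Euc n) : ℝ :=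
  (∑ j, ∑ l, G j l x * pd2 η j l x) + (∑ k, A k x * pd η k x) + Z x * η x

section WeakForm

variable {n : ℕ} {r : ℝ} {η g : Euc n → ℝ} {G : Fin n → Fin n → Euc n → ℝ}
  {A : Fin n → Euc n → ℝ} {Z : Euc n → ℝ}

theorem integral_weakIntegrand {μ : Measure (Euc n)}
    (hG : ∀ j l, Integrable (fun x => G j l x * pd2 η j l x) μ)
    (hA : ∀ k, Integrable (fun x => A k x * pd η k x) μ)
    (hZ : Integrable (fun x => Z x * η x) μ) :
    ∫ x, weakIntegrand G A Z η x ∂μ =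
      (∑ j, ∑ l, ∫ x, G j l x * pd2 η j l x ∂μ) + (∑ k, ∫ x, A k x * pd η k x ∂μ)
        + ∫ x, Z x * η x ∂μ := by
  have hG' : ∀ j, Integrable (fun x => ∑ l, G j l x * pd2 η j l x) μ := fun j =>
    integrable_finsetSum _ fun l _ => hG j l
  have hGA : Integrable
      (fun x => (∑ j, ∑ l, G j l x * pd2 η j l x) + ∑ k, A k x * pd η k x) μ :=
    (integrable_finsetSum _ fun j _ => hG' j).add (integrable_finsetSum _ fun k _ => hA k)
  unfold weakIntegrand
  rw [integral_add hGA hZ, integral_add (integrable_finsetSum _ fun j _ => hG' j)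
      (integrable_finsetSum _ fun k _ => hA k),
    integral_finsetSum _ fun j _ => hG' j, integral_finsetSum _ fun k _ => hA k]
  simp only [integral_finsetSum _ fun l _ => hG _ l]

theorem isTest_pd (hη : IsTest r η) (i : Fin n) : IsTest r (pd η i) :=
  ⟨hη.1.pd le_rfl i, hη.2.1.pd i, (tsupport_pd_subset i).trans hη.2.2⟩

theorem isTest_pd2 (hη : IsTest r η) (i j : Fin n) : IsTest r (pd2 η i j) :=
  isTest_pd (isTest_pd hη j) i

theorem IsTest.pd_pd_comm (hη : IsTest r η) (k p : Fin n) : pd (pd η k) p = pd (pd η p) k :=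
  funext fun _ => pd2_comm (hη.1.contDiffAt.of_le (WithTop.coe_le_coe.2 le_top)) p k

theorem IsTest.pd_pd2_comm (hη : IsTest r η) (p j l : Fin n) :
    pd (pd2 η j l) p = pd2 (pd η p) j l :=
  funext fun _ => _root_.pd_pd2_comm
    (hη.1.contDiffAt.of_le (WithTop.coe_le_coe.2 le_top)) p j l

theorem IsTest.integrableOn_mul (hη : IsTest r η) (hg : ContinuousOn g (ball 0 r)) :
    IntegrableOn (fun x => g x * η x) (ball 0 r) :=
  (integrable_mul_of_tsupport_subset isOpen_ball hg hη.1.continuous hη.2.1 hη.2.2).integrableOn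

theorem IsTest.setIntegral_pd_mul (hη : IsTest r η) (hg : ContDiffOn ℝ 1 g (ball 0 r))
    (p : Fin n) : ∫ x in ball 0 r, pd g p x * η x = -∫ x in ball 0 r, g x * pd η p x :=
  setIntegral_pd_mul_eq_neg isOpen_ball hg (hη.1.of_le (WithTop.coe_le_coe.2 le_top)) hη.2.1
    hη.2.2 p

theorem IsTest.setIntegral_weakIntegrand_pd (hη : IsTest r η)
    (hG : ∀ j l, ContDiffOn ℝ 1 (G j l) (ball 0 r)) (hA : ∀ k, ContDiffOn ℝ 1 (A k) (ball 0 r))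
    (hZ : ContDiffOn ℝ 1 Z (ball 0 r)) (p : Fin n) :
    ∫ x in ball 0 r, weakIntegrand (fun j l => pd (G j l) p) (fun k => pd (A k) p) (pd Z p) η x
      = -∫ x in ball 0 r, weakIntegrand G A Z (pd η p) x := by
  have hcont : ∀ {g : Euc n → ℝ}, ContDiffOn ℝ 1 g (ball 0 r) → ContinuousOn (pd g p) (ball 0 r) :=
    fun hg => (hg.pd isOpen_ball (m := 0) (by simp) p).continuousOn
  have hG2 : ∀ j l, ∫ x in ball 0 r, pd (G j l) p x * pd2 η j l x
      = -∫ x in ball 0 r, G j l x * pd2 (pd η p) j l x := fun j l => by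
    rw [(isTest_pd2 hη j l).setIntegral_pd_mul (hG j l) p, hη.pd_pd2_comm]
  have hA1 : ∀ k, ∫ x in ball 0 r, pd (A k) p x * pd η k x
      = -∫ x in ball 0 r, A k x * pd (pd η p) k x := fun k => by
    rw [(isTest_pd hη k).setIntegral_pd_mul (hA k) p, hη.pd_pd_comm]
  rw [integral_weakIntegrand (fun j l => (isTest_pd2 hη j l).integrableOn_mul (hcont (hG j l)))
      (fun k => (isTest_pd hη k).integrableOn_mul (hcont (hA k))) (hη.integrableOn_mul (hcont hZ)),
    integral_weakIntegrand
      (fun j l => (isTest_pd2 (isTest_pd hη p) j l).integrableOn_mul (hG j l).continuousOn)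
      (fun k => (isTest_pd (isTest_pd hη p) k).integrableOn_mul (hA k).continuousOn)
      ((isTest_pd hη p).integrableOn_mul hZ.continuousOn)]
  simp only [hG2, hA1, hη.setIntegral_pd_mul hZ p, Finset.sum_neg_distrib, neg_add]

end WeakForm

theorem statement3_general (n : ℕ) (r : ℝ)
    (U : Set (Jet n)) (F : Fin n → Fin n → Jet n → ℝ)
    (a : Fin n → Jet n → ℝ) (b : Jet n → ℝ) (u : Euc n → ℝ)
    (hUopen : IsOpen U)
    (hF : SmoothOnU U F a b)
    (hu : ContDiffOn ℝ (⊤ : ℕ∞) u (ball (0 : Euc n) r))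
    (hjet : JetInU r U u) (hsol : IsWeakSolution r F a b u) :
    ∀ p : Fin n, ∀ η : Euc n → ℝ, IsTest r η →
      ∫ x in ball (0 : Euc n) r,
        ((∑ j, ∑ l,
            ((∑ i, ∑ k, beta0 F u i j k l x * pd2 (pd u p) i k x) + gammaP F u p j l x)
              * pd2 η j l x)
          + (∑ k, pd (psiF a u k) p x * pd η k x) + pd (zetaF b u) p x * η x) = 0 := by
  intro p η hη
  obtain ⟨hFjl, ha, hb⟩ := hF
  have hu3 : ContDiffOn ℝ 3 u (ball 0 r) := hu.of_le (WithTop.coe_le_coe.2 le_top)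
  have hcomp : ∀ Φ : Jet n → ℝ, ContDiffOn ℝ (⊤ : ℕ∞) Φ U →
      ContDiffOn ℝ 1 (fun x => Φ (jet u x)) (ball 0 r) := fun Φ hΦ =>
    (hΦ.of_le (WithTop.coe_le_coe.2 le_top)).comp
      (jet_contDiffOn (m := 1) (hu.of_le (WithTop.coe_le_coe.2 le_top)) isOpen_ball) hjet
  have hchain : ∀ x ∈ ball 0 r, ∀ j l,
      (∑ i, ∑ k, beta0 F u i j k l x * pd2 (pd u p) i k x) + gammaP F u p j l x
        = pd (fun y => F j l (jet u y)) p x := fun x hx j l =>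
    (pd_comp_jet (hu3.contDiffAt (isOpen_ball.mem_nhds hx))
      (((hFjl j l).contDiffAt (hUopen.mem_nhds (hjet x hx))).differentiableAt (by simp)) p).symm
  calc _ = ∫ x in ball 0 r, weakIntegrand (fun j l => pd (fun y => F j l (jet u y)) p)
        (fun k => pd (psiF a u k) p) (pd (zetaF b u) p) η x :=
        setIntegral_congr_fun measurableSet_ball fun x hx => by
          simp only [weakIntegrand, hchain x hx]
    _ = -∫ x in ball 0 r, weakIntegrand (fun j l y => F j l (jet u y)) (psiF a u) (zetaF b u)
        (pd η p) x :=
      hη.setIntegral_weakIntegrand_pd (fun j l => hcomp _ (hFjl j l)) (fun k => hcomp _ (ha k))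
        (hcomp _ hb) p
    _ = 0 := neg_eq_zero.2 (hsol (pd η p) (isTest_pd hη p))

theorem statement3 (n : ℕ) (hn : 1 ≤ n) (r : ℝ) (hr0 : 0 < r) (hr1 : r ≤ 1)
    (U : Set (Jet n)) (F : Fin n → Fin n → Jet n → ℝ)
    (a : Fin n → Jet n → ℝ) (b : Jet n → ℝ) (u : Euc n → ℝ)
    (hUopen : IsOpen U) (hUconv : Convex ℝ U)
    (hUsub : U ⊆ (ball (0 : Euc n) r) ×ˢ (Set.univ ×ˢ Set.univ))
    (hF : SmoothOnU U F a b)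
    (hu : ContDiffOn ℝ (⊤ : ℕ∞) u (ball (0 : Euc n) r))
    (hjet : JetInU r U u) (hsol : IsWeakSolution r F a b u) :
    ∀ p : Fin n, ∀ η : Euc n → ℝ, IsTest r η →
      ∫ x in ball (0 : Euc n) r,
        ((∑ j, ∑ l,
            ((∑ i, ∑ k, beta0 F u i j k l x * pd2 (pd u p) i k x) + gammaP F u p j l x)
              * pd2 η j l x)
          + (∑ k, pd (psiF a u k) p x * pd η k x) + pd (zetaF b u) p x * η x) = 0 :=
  statement3_general n r U F a b u hUopen hF hu hjet hsol
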